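/- arXiv:1605.06420 — 2 statements merged into one kernel-verified Lean document; each statement's English description precedes it below -/
import Mathlib

section
/- Let b, b̃ : ℝᵈ → ℝᵈ satisfy ‖b(x) − b̃(x)‖₂ ≤ ε for all x, with b = ∇log π and b̃ = ∇log π̃ for probability densities π, π̃ ∈ C¹(ℝᵈ). Suppose there exist R, B, δ > 0 such that ‖b(x) − b̃(x)‖₂ ≤ B/‖x‖₂^{1+δ} whenever ‖x‖₂ > R, and there exists x* with π(x*) = π̃(x*). Then there is a constant B̃ > 0 such that |log π(x) − log π̃(x)| ≤ B̃ for all x ∈ ℝᵈ. -/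
/-!
Let `g = log π - log π̃`; its derivative is the score difference `b - b̃`. On the ball of
radius `R`, `g` is `ε`-Lipschitz, so it differs from `g x* = 0` by at most `ε (R + ‖x*‖)`.
Outside the ball, follow the ray from `R x/‖x‖` to `x`: there the derivative of `g` is bounded
by `B t^{-(1+δ)}`, whose antiderivative `-(B/δ) t^{-δ}` increases by less than `B / (δ R^δ)`.
-/

open Set Real

theorem abs_sub_le_sub_of_abs_deriv_le {f f' Φ Φ' : ℝ → ℝ} {a b : ℝ} (hab : a ≤ b)
    (hf : ContinuousOn f (Icc a b)) (hΦ : ContinuousOn Φ (Icc a b))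
    (hf' : ∀ t ∈ Ioo a b, HasDerivAt f (f' t) t) (hΦ' : ∀ t ∈ Ioo a b, HasDerivAt Φ (Φ' t) t)
    (hle : ∀ t ∈ Ioo a b, |f' t| ≤ Φ' t) :
    |f b - f a| ≤ Φ b - Φ a := by
  have hmono : ∀ s : ℝ, s = 1 ∨ s = -1 → MonotoneOn (fun t => Φ t - s * f t) (Icc a b) := by
    rintro s hs
    refine monotoneOn_of_hasDerivWithinAt_nonneg (convex_Icc a b) (hΦ.sub (hf.const_smul s))
      (fun t ht => ?_) (fun t ht => ?_) (f' := fun t => Φ' t - s * f' t)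
    · rw [interior_Icc] at ht
      exact ((hΦ' t ht).sub ((hf' t ht).const_mul s)).hasDerivWithinAt
    · rw [interior_Icc] at ht
      have := hle t ht
      rcases hs with rfl | rfl <;> [linarith [le_abs_self (f' t)]; linarith [neg_abs_le (f' t)]]
  have ha : a ∈ Icc a b := left_mem_Icc.2 hab
  have hb : b ∈ Icc a b := right_mem_Icc.2 hab
  have hsub := hmono 1 (.inl rfl) ha hb hab
  have hadd := hmono (-1) (.inr rfl) ha hb hab
  simp only at hsub hadd
  rw [abs_sub_le_iff]
  constructor <;> linarith

theorem abs_sub_le_of_abs_deriv_le_div_rpow {f f' : ℝ → ℝ} {a b B δ : ℝ} (ha : 0 < a)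
    (hδ : 0 < δ) (hB : 0 ≤ B) (hab : a ≤ b) (hf : ContinuousOn f (Icc a b))
    (hf' : ∀ t ∈ Ioo a b, HasDerivAt f (f' t) t)
    (hle : ∀ t ∈ Ioo a b, |f' t| ≤ B / t ^ (1 + δ)) :
    |f b - f a| ≤ B / (δ * a ^ δ) := by
  have hΦ' : ∀ t, 0 < t → HasDerivAt (fun t => -(B / δ) * t ^ (-δ)) (B / t ^ (1 + δ)) t := by
    intro t ht
    refine ((hasDerivAt_rpow_const (p := -δ) (.inl ht.ne')).const_mul (-(B / δ))).congr_deriv ?_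
    rw [show -δ - 1 = -(1 + δ) by ring, rpow_neg ht.le]
    field_simp
  have hpos : ∀ t ∈ Icc a b, 0 < t := fun t ht => ha.trans_le ht.1
  calc |f b - f a| ≤ -(B / δ) * b ^ (-δ) - -(B / δ) * a ^ (-δ) :=
        abs_sub_le_sub_of_abs_deriv_le hab hf
          (fun t ht => (hΦ' t (hpos t ht)).continuousAt.continuousWithinAt) hf'
          (fun t ht => hΦ' t (hpos t (Ioo_subset_Icc_self ht))) hle
    _ ≤ B / δ * a ^ (-δ) := by
        have : 0 ≤ B / δ * b ^ (-δ) := by have := hpos b (right_mem_Icc.2 hab); positivity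
        linarith
    _ = B / (δ * a ^ δ) := by rw [rpow_neg ha.le]; field_simp

section Decay

variable {E : Type*} [NormedAddCommGroup E] [NormedSpace ℝ E] {g : E → ℝ} {ε R B δ : ℝ}

theorem abs_sub_le_of_norm_fderiv_le_div_rpow (hg : Differentiable ℝ g) (hR : 0 < R)
    (hδ : 0 < δ) (hB : 0 ≤ B)
    (hdecay : ∀ x, R < ‖x‖ → ‖fderiv ℝ g x‖ ≤ B / ‖x‖ ^ (1 + δ)) {x : E} (hx : R ≤ ‖x‖) :
    |g x - g ((R / ‖x‖) • x)| ≤ B / (δ * R ^ δ) := by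
  have hx0 : ‖x‖ ≠ 0 := (hR.trans_le hx).ne'
  set u := ‖x‖⁻¹ • x
  have hu : ‖u‖ = 1 := by simp [u, norm_smul, hx0]
  have hray : ∀ t, HasDerivAt (fun t : ℝ => g (t • u)) (fderiv ℝ g (t • u) u) t := fun t =>
    (hg _).hasFDerivAt.comp_hasDerivAt t
      (((hasDerivAt_id t).smul_const u).congr_deriv (one_smul ℝ u))
  have key := abs_sub_le_of_abs_deriv_le_div_rpow hR hδ hB hx
    (fun t _ => (hray t).continuousAt.continuousWithinAt) (fun t _ => hray t) fun t ht => by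
      have hnorm : ‖t • u‖ = t := by rw [norm_smul, hu, mul_one, norm_of_nonneg (hR.trans ht.1).le]
      calc |fderiv ℝ g (t • u) u| ≤ ‖fderiv ℝ g (t • u)‖ * ‖u‖ := (fderiv ℝ g (t • u)).le_opNorm u
        _ ≤ B / t ^ (1 + δ) := by
          rw [hu, mul_one]
          simpa only [hnorm] using hdecay (t • u) (hnorm.symm ▸ ht.1)
  simpa [u, smul_smul, hx0, div_eq_mul_inv] using key

theorem abs_sub_le_of_norm_fderiv_le_of_decay (hg : Differentiable ℝ g) (hR : 0 < R)
    (hδ : 0 < δ) (hB : 0 ≤ B) (hbound : ∀ x, ‖fderiv ℝ g x‖ ≤ ε)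
    (hdecay : ∀ x, R < ‖x‖ → ‖fderiv ℝ g x‖ ≤ B / ‖x‖ ^ (1 + δ)) (x₀ x : E) :
    |g x - g x₀| ≤ ε * (R + ‖x₀‖) + B / (δ * R ^ δ) := by
  have hε : 0 ≤ ε := (norm_nonneg _).trans (hbound x₀)
  have htail : 0 ≤ B / (δ * R ^ δ) := by positivity
  have hnear : ∀ y, ‖y‖ ≤ R → |g y - g x₀| ≤ ε * (R + ‖x₀‖) := fun y hy =>
    calc |g y - g x₀| ≤ ε * ‖y - x₀‖ := by
          simpa using convex_univ.norm_image_sub_le_of_norm_fderiv_le (fun z _ => hg z)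
            (fun z _ => hbound z) (mem_univ x₀) (mem_univ y)
      _ ≤ ε * (R + ‖x₀‖) := by gcongr; exact (norm_sub_le _ _).trans (by linarith)
  rcases le_or_gt ‖x‖ R with hx | hx
  · linarith [hnear x hx]
  · have hy : ‖(R / ‖x‖) • x‖ = R := by
      rw [norm_smul, norm_div, norm_norm, norm_of_nonneg hR.le, div_mul_cancel₀ _ (hR.trans hx).ne']
    calc |g x - g x₀| ≤ |g x - g ((R / ‖x‖) • x)| + |g ((R / ‖x‖) • x) - g x₀| :=
          abs_sub_le _ _ _
      _ ≤ B / (δ * R ^ δ) + ε * (R + ‖x₀‖) :=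
          add_le_add (abs_sub_le_of_norm_fderiv_le_div_rpow hg hR hδ hB hdecay hx.le)
            (hnear _ hy.le)
      _ = _ := add_comm _ _

end Decay

theorem norm_fderiv_sub_eq_norm_gradient_sub {F : Type*} [NormedAddCommGroup F]
    [InnerProductSpace ℝ F] [CompleteSpace F] {f₁ f₂ : F → ℝ} {x : F}
    (h₁ : DifferentiableAt ℝ f₁ x) (h₂ : DifferentiableAt ℝ f₂ x) :
    ‖fderiv ℝ (fun y => f₁ y - f₂ y) x‖ = ‖gradient f₁ x - gradient f₂ x‖ := by
  rw [fderiv_fun_sub h₁ h₂, ← toDual_gradient, ← toDual_gradient, ← map_sub,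
    LinearIsometryEquiv.norm_map]

theorem log_density_uniformly_close_of_score_close_general
    {d : ℕ} (p pt : EuclideanSpace ℝ (Fin d) → ℝ)
    (hp : ContDiff ℝ 1 p) (hpt : ContDiff ℝ 1 pt)
    (hppos : ∀ x, 0 < p x) (hptpos : ∀ x, 0 < pt x)
    (b bt : EuclideanSpace ℝ (Fin d) → EuclideanSpace ℝ (Fin d))
    (hb : ∀ x, b x = gradient (fun y => Real.log (p y)) x)
    (hbt : ∀ x, bt x = gradient (fun y => Real.log (pt y)) x)
    (ε : ℝ) (hε : 0 < ε) (hclose : ∀ x, ‖b x - bt x‖ ≤ ε)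
    (R B δ : ℝ) (hR : 0 < R) (hB : 0 < B) (hδ : 0 < δ)
    (hdecay : ∀ x, R < ‖x‖ → ‖b x - bt x‖ ≤ B / ‖x‖ ^ (1 + δ))
    (xstar : EuclideanSpace ℝ (Fin d)) (hxstar : p xstar = pt xstar) :
    ∃ Bt : ℝ, 0 < Bt ∧ ∀ x, |Real.log (p x) - Real.log (pt x)| ≤ Bt := by
  have hlogp : Differentiable ℝ fun y => Real.log (p y) :=
    (hp.differentiable one_ne_zero).log fun y => (hppos y).ne'
  have hlogpt : Differentiable ℝ fun y => Real.log (pt y) :=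
    (hpt.differentiable one_ne_zero).log fun y => (hptpos y).ne'
  have hscore : ∀ x, ‖fderiv ℝ (fun y => Real.log (p y) - Real.log (pt y)) x‖ = ‖b x - bt x‖ :=
    fun x => by rw [hb, hbt, norm_fderiv_sub_eq_norm_gradient_sub (hlogp x) (hlogpt x)]
  refine ⟨ε * (R + ‖xstar‖) + B / (δ * R ^ δ), by positivity, fun x => ?_⟩
  simpa [hxstar] using abs_sub_le_of_norm_fderiv_le_of_decay (hlogp.sub hlogpt) hR hδ hB.le
    (fun x => (hscore x).trans_le (hclose x)) (fun x hx => (hscore x).trans_le (hdecay x hx))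
    xstar x

/-- If the score functions of two positive `C¹` probability densities are uniformly
`ε`-close, decay at rate `B/‖x‖^{1+δ}` outside a ball of radius `R`, and the densities
agree at some point `x*`, then the log-densities are uniformly close. -/
theorem log_density_uniformly_close_of_score_close
    {d : ℕ} (p pt : EuclideanSpace ℝ (Fin d) → ℝ)
    (hp : ContDiff ℝ 1 p) (hpt : ContDiff ℝ 1 pt)
    (hppos : ∀ x, 0 < p x) (hptpos : ∀ x, 0 < pt x)
    (hpint : ∫ x, p x = 1) (hptint : ∫ x, pt x = 1)
    (b bt : EuclideanSpace ℝ (Fin d) → EuclideanSpace ℝ (Fin d))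
    (hb : ∀ x, b x = gradient (fun y => Real.log (p y)) x)
    (hbt : ∀ x, bt x = gradient (fun y => Real.log (pt y)) x)
    (ε : ℝ) (hε : 0 < ε) (hclose : ∀ x, ‖b x - bt x‖ ≤ ε)
    (R B δ : ℝ) (hR : 0 < R) (hB : 0 < B) (hδ : 0 < δ)
    (hdecay : ∀ x, R < ‖x‖ → ‖b x - bt x‖ ≤ B / ‖x‖ ^ (1 + δ))
    (xstar : EuclideanSpace ℝ (Fin d)) (hxstar : p xstar = pt xstar) :
    ∃ Bt : ℝ, 0 < Bt ∧ ∀ x, |Real.log (p x) - Real.log (pt x)| ≤ Bt :=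
  log_density_uniformly_close_of_score_close_general p pt hp hpt hppos hptpos b bt hb hbt ε hε
    hclose R B δ hR hB hδ hdecay xstar hxstar
end

section
/- Let b̃ : ℝᵈ → ℝᵈ satisfy ‖b(x) − b̃(x)‖₂ ≤ ε/2 for all x, and define f_R(x) = −(εx)/(2‖x‖₂) · ((2‖x‖₂/R − 1)·1[R/2 ≤ ‖x‖₂ < R] + 1[‖x‖₂ ≥ R]) (with f_R(0) = 0). Let b̃_R(x) = b̃(x) + ∇f_R(x) wherever defined. Then ‖b(x) − b̃_R(x)‖₂ ≤ ε for all x, and for all x with ‖x‖₂ > R, x · (b(x) − b̃_R(x)) ≥ 0. -/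
/-!
The correction is radial, `f_R(x) = -(ε/2) φ(‖x‖) x/‖x‖` with a cutoff `0 ≤ φ ≤ 1`, so it has
norm at most `ε/2` and the triangle inequality gives `ε`-accuracy. Beyond `R` we have `φ = 1`, so
`⟪x, b x - b̃_R x⟫ = ⟪x, b x - b̃ x⟫ + (ε/2)‖x‖`, and Cauchy–Schwarz bounds the first term below
by `-(ε/2)‖x‖`.
-/

open scoped RealInnerProductSpace

/-- The cutoff `φ` in `f_R(x) = -(ε/2) φ(‖x‖) x/‖x‖`. -/
noncomputable def rampCutoff (R t : ℝ) : ℝ :=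
  (if R / 2 ≤ t ∧ t < R then 2 * t / R - 1 else 0) + (if R ≤ t then (1 : ℝ) else 0)

theorem rampCutoff_nonneg (R t : ℝ) : 0 ≤ rampCutoff R t := by
  unfold rampCutoff
  have hramp : R / 2 ≤ t ∧ t < R → 0 ≤ 2 * t / R - 1 := fun ⟨hlo, hhi⟩ => by
    have : 1 ≤ 2 * t / R := (one_le_div (by linarith)).mpr (by linarith)
    linarith
  split_ifs with h
  · linarith [hramp h]
  · linarith [hramp h]
  all_goals norm_num

theorem rampCutoff_le_one (R t : ℝ) : rampCutoff R t ≤ 1 := by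
  unfold rampCutoff
  split_ifs with hramp hfar hfar
  · exact absurd hfar (not_le.mpr hramp.2)
  · have hR : 0 < R := by linarith [hramp.1, hramp.2]
    have : 2 * t / R ≤ 2 := (div_le_iff₀ hR).mpr (by linarith [hramp.2])
    linarith
  all_goals norm_num

theorem rampCutoff_of_le {R t : ℝ} (h : R ≤ t) : rampCutoff R t = 1 := by
  simp [rampCutoff, h, not_lt.mpr h]

section Radial

variable {E : Type*}

theorem norm_div_norm_smul_le [NormedAddCommGroup E] [NormedSpace ℝ E] (a : ℝ) (x : E) :
    ‖(a / ‖x‖) • x‖ ≤ |a| := by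
  rcases eq_or_ne ‖x‖ 0 with hx | hx
  · simp [hx]
  · rw [norm_smul, Real.norm_eq_abs, abs_div, abs_norm, div_mul_cancel₀ _ hx]

theorem real_inner_add_div_norm_smul_nonneg [NormedAddCommGroup E] [InnerProductSpace ℝ E]
    {v : E} {r : ℝ} (hv : ‖v‖ ≤ r) (x : E) : 0 ≤ ⟪x, v + (r / ‖x‖) • x⟫ := by
  have hradial : r / ‖x‖ * ‖x‖ ^ 2 = r * ‖x‖ := by
    rcases eq_or_ne ‖x‖ 0 with hx | hx
    · simp [hx]
    · field_simp
  have hcs : -(‖x‖ * ‖v‖) ≤ ⟪x, v⟫ := neg_le_of_abs_le (abs_real_inner_le_norm x v)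
  rw [inner_add_right, real_inner_smul_right, real_inner_self_eq_norm_sq, hradial]
  nlinarith [norm_nonneg x]

end Radial

theorem modified_drift_condition_two_general
    {d : ℕ} (b bt : EuclideanSpace ℝ (Fin d) → EuclideanSpace ℝ (Fin d))
    (ε R : ℝ)
    (hbt : ∀ x, ‖b x - bt x‖ ≤ ε / 2)
    (fR btR : EuclideanSpace ℝ (Fin d) → EuclideanSpace ℝ (Fin d))
    (hfR : ∀ x, fR x =
      (-(ε * ((if R / 2 ≤ ‖x‖ ∧ ‖x‖ < R then 2 * ‖x‖ / R - 1 else 0)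
        + (if R ≤ ‖x‖ then (1:ℝ) else 0))) / (2 * ‖x‖)) • x)
    (hbtR : ∀ x, btR x = bt x + fR x) :
    (∀ x, ‖b x - btR x‖ ≤ ε) ∧
    (∀ x, R < ‖x‖ → 0 ≤ ⟪x, b x - btR x⟫) := by
  have hε2 : 0 ≤ ε / 2 := (norm_nonneg _).trans (hbt 0)
  have hdiff : ∀ x, b x - btR x = (b x - bt x) + (ε / 2 * rampCutoff R ‖x‖ / ‖x‖) • x := by
    intro x
    rw [hbtR, hfR, ← rampCutoff, sub_add_eq_sub_sub, sub_eq_add_neg _ (_ • x), ← neg_smul]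
    congr 2
    ring
  refine ⟨fun x => ?_, fun x hx => ?_⟩
  · have hcorr : |ε / 2 * rampCutoff R ‖x‖| ≤ ε / 2 := by
      rw [abs_of_nonneg (mul_nonneg hε2 (rampCutoff_nonneg _ _))]
      exact mul_le_of_le_one_right hε2 (rampCutoff_le_one _ _)
    calc ‖b x - btR x‖ ≤ ‖b x - bt x‖ + |ε / 2 * rampCutoff R ‖x‖| := by
          rw [hdiff]; exact (norm_add_le _ _).trans (by gcongr; exact norm_div_norm_smul_le _ _)
      _ ≤ ε := by linarith [hbt x]
  · rw [hdiff, rampCutoff_of_le hx.le, mul_one]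
    exact real_inner_add_div_norm_smul_nonneg (hbt x) x

/-- Modifying an `ε/2`-accurate drift approximation `b̃` by the vector field
`f_R(x) = -(εx)/(2‖x‖) ((2‖x‖/R - 1)·1[R/2 ≤ ‖x‖ < R] + 1[‖x‖ ≥ R])` yields a drift
`b̃_R = b̃ + f_R` that is `ε`-accurate and satisfies `x ⬝ (b(x) - b̃_R(x)) ≥ 0` for
`‖x‖ > R`. -/
theorem modified_drift_condition_two
    {d : ℕ} (b bt : EuclideanSpace ℝ (Fin d) → EuclideanSpace ℝ (Fin d))
    (ε R : ℝ) (hε : 0 < ε) (hR : 0 < R)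
    (hbt : ∀ x, ‖b x - bt x‖ ≤ ε / 2)
    (fR btR : EuclideanSpace ℝ (Fin d) → EuclideanSpace ℝ (Fin d))
    (hfR : ∀ x, fR x =
      (-(ε * ((if R / 2 ≤ ‖x‖ ∧ ‖x‖ < R then 2 * ‖x‖ / R - 1 else 0)
        + (if R ≤ ‖x‖ then (1:ℝ) else 0))) / (2 * ‖x‖)) • x)
    (hbtR : ∀ x, btR x = bt x + fR x) :
    (∀ x, ‖b x - btR x‖ ≤ ε) ∧
    (∀ x, R < ‖x‖ → 0 ≤ ⟪x, b x - btR x⟫) :=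
  modified_drift_condition_two_general b bt ε R hbt fR btR hfR hbtR
end
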